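/- For every q in the relative interior of the solution set Q and every p ∈ Q, the inclusions N(q) ⊆ N(p) and P(q) ⊆ P(p) hold. -/
import Mathlib


open Set

noncomputable section

/-- `g` is a polynomial function on `ℝⁿ`. -/
def IsPolyFun (n : ℕ) (g : (Fin n → ℝ) → ℝ) : Prop :=
  ∃ P : MvPolynomial (Fin n) ℝ, ∀ x, g x = MvPolynomial.eval x P

/-- The uniform deviation `‖f − q‖_∞ = max_{x ∈ X} |f x − q x|`. -/
def dev {n : ℕ} (X : Set (Fin n → ℝ)) (f q : (Fin n → ℝ) → ℝ) : ℝ :=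
  sSup ((fun x => |f x - q x|) '' X)

/-- The solution set `Q` of the Chebyshev approximation problem for `f` on `X` over `V`. -/
def solSet {n : ℕ} (V : Submodule ℝ ((Fin n → ℝ) → ℝ)) (X : Set (Fin n → ℝ))
    (f : (Fin n → ℝ) → ℝ) : Set ((Fin n → ℝ) → ℝ) :=
  {q | q ∈ V ∧ ∀ p ∈ V, dev X f q ≤ dev X f p}

/-- `N(q)`: points of minimal deviation. -/
def Nset {n : ℕ} (X : Set (Fin n → ℝ)) (f q : (Fin n → ℝ) → ℝ) : Set (Fin n → ℝ) :=
  {x ∈ X | q x - f x = dev X f q}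

/-- `P(q)`: points of maximal deviation. -/
def Pset {n : ℕ} (X : Set (Fin n → ℝ)) (f q : (Fin n → ℝ) → ℝ) : Set (Fin n → ℝ) :=
  {x ∈ X | f x - q x = dev X f q}

/-- `S(q)`: the set of polynomials in `V` separating `P(q)` and `N(q)`. -/
def sepSet {n : ℕ} (V : Submodule ℝ ((Fin n → ℝ) → ℝ)) (X : Set (Fin n → ℝ))
    (f q : (Fin n → ℝ) → ℝ) : Set ((Fin n → ℝ) → ℝ) :=
  {s | s ∈ V ∧ ∀ x ∈ Pset X f q, ∀ y ∈ Nset X f q, s x * s y ≤ 0}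

lemma abs_le_dev' {n : ℕ} {X : Set (Fin n → ℝ)} (hXc : IsCompact X)
    {f g : (Fin n → ℝ) → ℝ} (hf : ContinuousOn f X) (hg : ContinuousOn g X)
    {x : Fin n → ℝ} (hx : x ∈ X) : |f x - g x| ≤ dev X f g := by
  apply le_csSup (hXc.bddAbove_image (by exact (hf.sub hg).abs))
  exact ⟨x, hx, rfl⟩

lemma polyCont {n : ℕ} {g : (Fin n → ℝ) → ℝ} (h : IsPolyFun n g) : Continuous g := by
  obtain ⟨P, hP⟩ := h
  have : g = fun x => MvPolynomial.eval x P := funext hP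
  rw [this]; exact MvPolynomial.continuous_eval (p := P)

/-- For every `q` in the relative interior of the solution set `Q` and every `p ∈ Q`,
`N(q) ⊆ N(p)` and `P(q) ⊆ P(p)`. -/
theorem stmt4 (n : ℕ) (X : Set (Fin n → ℝ)) (hX : X.Nonempty) (hXc : IsCompact X)
    (f : (Fin n → ℝ) → ℝ) (hf : ContinuousOn f X)
    (V : Submodule ℝ ((Fin n → ℝ) → ℝ)) (hVpoly : ∀ g ∈ V, IsPolyFun n g)
    (hVfd : FiniteDimensional ℝ ↥V) :
    ∀ q ∈ intrinsicInterior ℝ (solSet V X f), ∀ p ∈ solSet V X f,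
      Nset X f q ⊆ Nset X f p ∧ Pset X f q ⊆ Pset X f p := by
  intro q hq p hp
  set S := solSet V X f with hS
  have hqS : q ∈ S := intrinsicInterior_subset hq
  -- find r = t • (q - p) + q ∈ S for some t > 0
  obtain ⟨q', hq', hq'val⟩ := hq
  have hpspan : p ∈ affineSpan ℝ S := subset_affineSpan ℝ S hp
  have hmem : ∀ t : ℝ, t • (q - p) + q ∈ affineSpan ℝ S := by
    intro t
    have := (affineSpan ℝ S).smul_vsub_vadd_mem t q'.2 hpspan q'.2
    simpa [hq'val, vsub_eq_sub, vadd_eq_add] using this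
  set c : ℝ → affineSpan ℝ S := fun t => ⟨t • (q - p) + q, hmem t⟩ with hc
  have hcc : Continuous c := by
    apply Continuous.subtype_mk
    continuity
  have hc0 : c 0 ∈ interior ((↑) ⁻¹' S : Set (affineSpan ℝ S)) := by
    have : c 0 = q' := by
      apply Subtype.ext
      simp [hc, hq'val]
    rw [this]; exact hq'
  have hopen : IsOpen (c ⁻¹' interior ((↑) ⁻¹' S : Set (affineSpan ℝ S))) :=
    isOpen_interior.preimage hcc
  obtain ⟨ε, hε, hball⟩ := Metric.isOpen_iff.1 hopen 0 hc0
  set t : ℝ := ε / 2 with htdef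
  have ht : 0 < t := by positivity
  have htmem : c t ∈ interior ((↑) ⁻¹' S : Set (affineSpan ℝ S)) := by
    apply hball
    have : dist t 0 < ε := by
      rw [Real.dist_eq, sub_zero, abs_of_pos ht]; linarith
    exact this
  have hrS : t • (q - p) + q ∈ S := by
    have h := interior_subset htmem
    exact h
  set r : (Fin n → ℝ) → ℝ := t • (q - p) + q with hr
  -- continuity of everything
  have hqc : ContinuousOn q X := (polyCont (hVpoly q hqS.1)).continuousOn
  have hpc : ContinuousOn p X := (polyCont (hVpoly p hp.1)).continuousOn
  have hrc : ContinuousOn r X := (polyCont (hVpoly r hrS.1)).continuousOn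
  -- equal deviations
  have hdp : dev X f q = dev X f p := le_antisymm (hqS.2 p hp.1) (hp.2 q hqS.1)
  have hdr : dev X f q = dev X f r := le_antisymm (hqS.2 r hrS.1) (hrS.2 q hqS.1)
  have hrx : ∀ x, r x = t * (q x - p x) + q x := by
    intro x; simp [hr]
  constructor
  · intro x hx
    obtain ⟨hxX, hxe⟩ := hx
    refine ⟨hxX, ?_⟩
    have h1 : |f x - p x| ≤ dev X f p := abs_le_dev' hXc hf hpc hxX
    have h2 : |f x - r x| ≤ dev X f r := abs_le_dev' hXc hf hrc hxX
    have h2' : r x - f x ≤ dev X f q := by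
      rw [hdr]; exact (abs_le.1 (abs_sub_comm (f x) (r x) ▸ h2)).2
    have h1' : p x - f x ≤ dev X f p := (abs_le.1 (abs_sub_comm (f x) (p x) ▸ h1)).2
    rw [hrx x] at h2'
    -- from t*(q x - p x) + q x - f x ≤ E and q x - f x = E : q x ≤ p x
    have hqp : q x ≤ p x := by nlinarith
    have : dev X f p ≤ p x - f x := by rw [← hdp, ← hxe]; linarith
    linarith
  · intro x hx
    obtain ⟨hxX, hxe⟩ := hx
    refine ⟨hxX, ?_⟩
    have h1 : |f x - p x| ≤ dev X f p := abs_le_dev' hXc hf hpc hxX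
    have h2 : |f x - r x| ≤ dev X f r := abs_le_dev' hXc hf hrc hxX
    have h2' : f x - r x ≤ dev X f q := by rw [hdr]; exact (abs_le.1 h2).2
    have h1' : f x - p x ≤ dev X f p := (abs_le.1 h1).2
    rw [hrx x] at h2'
    have hqp : p x ≤ q x := by nlinarith
    have : dev X f p ≤ f x - p x := by rw [← hdp, ← hxe]; linarith
    linarith
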